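/- arXiv:2009.06229 — 2 statements merged into one kernel-verified Lean document; each statement's English description precedes it below -/
import Mathlib

section
/- Let x : ℕ → ℝ be a real sequence (indexed from 1). The series Σ_{i=1}^∞ x_i converges to a finite limit if and only if there exists a nonnegative sequence (c_j)_{j≥1} with c_j → 0 such that for every sequence of block sizes n : ℕ → ℕ with n_j ≥ 1 for all j, the posterior means m_k = (Σ_{j=1}^k 1/j² + Σ_{j=1}^k y_j)/(k + 2 Σ_{j=1}^k 1/j²) converge to 1 as k → ∞, where y_j = 1 if |S_j| ≤ c_j and y_j = 0 otherwise, and S_j is the j-th block sum determined by the block sizes n. -/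
open Filter Finset

/-- Cumulative block endpoints: `N n j = n 1 + ⋯ + n j`, with `N n 0 = 0`. -/
noncomputable def blockEnd (n : ℕ → ℕ) (j : ℕ) : ℕ := ∑ k ∈ Finset.Icc 1 j, n k

/-- The `j`-th block sum `S j = ∑_{i = N_{j-1}+1}^{N_j} x i`. -/
noncomputable def blockSum (x : ℕ → ℝ) (n : ℕ → ℕ) (j : ℕ) : ℝ :=
  ∑ i ∈ Finset.Ioc (blockEnd n (j - 1)) (blockEnd n j), x i

/-- `y j = 1` if `|S j| ≤ c j` and `y j = 0` otherwise. -/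
noncomputable def indicatorY (x : ℕ → ℝ) (n : ℕ → ℕ) (c : ℕ → ℝ) (j : ℕ) : ℝ :=
  if |blockSum x n j| ≤ c j then 1 else 0

/-- Stage-`k` posterior mean
`m k = (∑_{j=1}^k 1/j² + ∑_{j=1}^k y j) / (k + 2 ∑_{j=1}^k 1/j²)`. -/
noncomputable def postMean (x : ℕ → ℝ) (n : ℕ → ℕ) (c : ℕ → ℝ) (k : ℕ) : ℝ :=
  (∑ j ∈ Finset.Icc 1 k, (1 : ℝ) / (j : ℝ) ^ 2 + ∑ j ∈ Finset.Icc 1 k, indicatorY x n c j) /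
    ((k : ℝ) + 2 * ∑ j ∈ Finset.Icc 1 k, (1 : ℝ) / (j : ℝ) ^ 2)

/-! If the partial sums `T m = ∑_{i ≤ m} x i` converge, they have a Cauchy modulus `b N → 0`;
with `c j = b (j - 1)` every block sum obeys `|S j| ≤ c j`, because both endpoints of block `j`
are at least `j - 1`, so every `y j = 1`. If `T` is not Cauchy, there is `ε > 0` such that from
every index the partial sums later move by at least `ε`; cutting the blocks at such indices gives
`|S j| ≥ ε > c j`, i.e. `y j = 0`, for all large `j`. Since the prior masses `∑_{j ≤ k} 1/j²` stay
bounded, `m k → 1` is equivalent to `(∑_{j ≤ k} y j) / k → 1`, a Cesàro mean that tends to `1`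
in the first case and to `0` in the second. -/

lemma sum_Icc_one_eq_sum_range {M : Type*} [AddCommMonoid M] (y : ℕ → M) (k : ℕ) :
    ∑ j ∈ Icc 1 k, y j = ∑ j ∈ range k, y (j + 1) := by
  induction k with
  | zero => simp
  | succ k ih => rw [sum_Icc_succ_top (by omega), ih, sum_range_succ]

lemma sum_Ioc_eq_sum_Icc_one_sub {G : Type*} [AddCommGroup G] (x : ℕ → G) {a b : ℕ}
    (hab : a ≤ b) : ∑ i ∈ Ioc a b, x i = ∑ i ∈ Icc 1 b, x i - ∑ i ∈ Icc 1 a, x i := by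
  rw [← zero_add 1, Icc_add_one_left_eq_Ioc, Icc_add_one_left_eq_Ioc,
    ← sum_Ioc_consecutive x (Nat.zero_le a) hab, add_sub_cancel_left]

lemma Filter.Tendsto.cesaro_Icc_one {y : ℕ → ℝ} {l : ℝ} (h : Tendsto y atTop (nhds l)) :
    Tendsto (fun k : ℕ => (∑ j ∈ Icc 1 k, y j) / k) atTop (nhds l) := by
  simpa only [sum_Icc_one_eq_sum_range, inv_mul_eq_div] using
    (h.comp (tendsto_add_atTop_nat 1)).cesaro (u := fun j => y (j + 1))

lemma tendsto_add_div_add_two_mul_iff {A s : ℕ → ℝ}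
    (hA : Tendsto (fun k : ℕ => A k / k) atTop (nhds 0)) :
    Tendsto (fun k : ℕ => (A k + s k) / (k + 2 * A k)) atTop (nhds 1) ↔
      Tendsto (fun k : ℕ => s k / k) atTop (nhds 1) := by
  have hden : Tendsto (fun k : ℕ => 1 + 2 * (A k / k)) atTop (nhds 1) := by
    simpa using (hA.const_mul 2).const_add 1
  have hrescale : ∀ᶠ k : ℕ in atTop,
      (A k + s k) / (k + 2 * A k) = (A k / k + s k / k) / (1 + 2 * (A k / k)) := by
    filter_upwards [eventually_ne_atTop 0] with k hk
    have hk : (k : ℝ) ≠ 0 := Nat.cast_ne_zero.2 hk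
    rw [← div_div_div_cancel_right₀ hk, add_div]
    congr 1
    field_simp
  rw [tendsto_congr' hrescale]
  constructor
  · intro hm
    have h := (hm.mul hden).sub hA
    rw [one_mul, sub_zero] at h
    refine h.congr' ?_
    filter_upwards [hden.eventually_ne one_ne_zero] with k hk
    rw [div_mul_cancel₀ _ hk, add_sub_cancel_left]
  · intro hf
    have h := (hA.add hf).div hden one_ne_zero
    rwa [zero_add, div_one] at h

lemma tendsto_sum_one_div_sq_div_nat :
    Tendsto (fun k : ℕ => (∑ j ∈ Icc 1 k, (1 : ℝ) / (j : ℝ) ^ 2) / k) atTop (nhds 0) := by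
  have hsum : Summable fun j : ℕ => (1 : ℝ) / (j : ℝ) ^ 2 :=
    Real.summable_one_div_nat_pow.mpr one_lt_two
  refine squeeze_zero (fun k => by positivity) (fun k => ?_)
    (tendsto_const_div_atTop_nhds_zero_nat (∑' j : ℕ, (1 : ℝ) / (j : ℝ) ^ 2))
  gcongr
  exact hsum.sum_le_tsum _ fun j _ => by positivity

lemma tendsto_postMean_one_iff (x : ℕ → ℝ) (n : ℕ → ℕ) (c : ℕ → ℝ) :
    Tendsto (postMean x n c) atTop (nhds 1) ↔
      Tendsto (fun k : ℕ => (∑ j ∈ Icc 1 k, indicatorY x n c j) / k) atTop (nhds 1) :=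
  tendsto_add_div_add_two_mul_iff tendsto_sum_one_div_sq_div_nat

lemma blockEnd_succ (n : ℕ → ℕ) (j : ℕ) : blockEnd n (j + 1) = blockEnd n j + n (j + 1) :=
  sum_Icc_succ_top (by omega) n

lemma blockEnd_mono (n : ℕ → ℕ) : Monotone (blockEnd n) :=
  fun _ _ h => sum_le_sum_of_subset (Icc_subset_Icc_right h)

lemma le_blockEnd {n : ℕ → ℕ} (hn : ∀ j, 1 ≤ n j) (j : ℕ) : j ≤ blockEnd n j := by
  simpa [blockEnd] using card_nsmul_le_sum (Icc 1 j) n 1 fun j _ => hn j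

lemma blockSum_eq_sub (x : ℕ → ℝ) (n : ℕ → ℕ) (j : ℕ) :
    blockSum x n j =
      ∑ i ∈ Icc 1 (blockEnd n j), x i - ∑ i ∈ Icc 1 (blockEnd n (j - 1)), x i :=
  sum_Ioc_eq_sum_Icc_one_sub x (blockEnd_mono n (Nat.sub_le j 1))

lemma abs_blockSum_le {x b : ℕ → ℝ}
    (hb : ∀ p q N : ℕ, N ≤ p → N ≤ q → dist (∑ i ∈ Icc 1 p, x i) (∑ i ∈ Icc 1 q, x i) ≤ b N)
    {n : ℕ → ℕ} (hn : ∀ j, 1 ≤ n j) (j : ℕ) : |blockSum x n j| ≤ b (j - 1) := by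
  rw [blockSum_eq_sub, ← Real.dist_eq]
  exact hb _ _ _ ((Nat.sub_le j 1).trans (le_blockEnd hn j)) (le_blockEnd hn (j - 1))

lemma exists_blockEnd_eq {N : ℕ → ℕ} (hN : StrictMono N) (h0 : N 0 = 0) :
    ∃ n : ℕ → ℕ, (∀ j, 1 ≤ n j) ∧ blockEnd n = N := by
  -- `blockEnd` never reads `n 0`; it is set to `1` only so that `1 ≤ n 0`.
  refine ⟨fun j => if j = 0 then 1 else N j - N (j - 1), fun j => ?_, funext fun j => ?_⟩
  · dsimp only
    split_ifs with hj
    · rfl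
    · have := hN (Nat.sub_one_lt hj); omega
  · induction j with
    | zero => simp [blockEnd, h0]
    | succ j ih =>
      rw [blockEnd_succ, ih, if_neg j.succ_ne_zero, Nat.add_sub_cancel]
      have := hN (Nat.lt_add_one j); omega

lemma exists_strictMono_le_dist_of_not_cauchySeq {α : Type*} [PseudoMetricSpace α]
    {u : ℕ → α} (hu : ¬ CauchySeq u) :
    ∃ ε > 0, ∃ N : ℕ → ℕ, StrictMono N ∧ N 0 = 0 ∧ ∀ j, ε ≤ dist (u (N (j + 1))) (u (N j)) := by
  simp only [Metric.cauchySeq_iff', not_forall, not_exists, not_lt] at hu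
  obtain ⟨ε, hε, hu⟩ := hu
  choose next hnext_ge hnext_dist using hu
  have hnext_gt : ∀ m, m < next m := fun m =>
    (hnext_ge m).lt_of_ne fun h => by simpa [← h, hε.not_ge] using hnext_dist m
  refine ⟨ε, hε, fun j => next^[j] 0, strictMono_nat_of_lt_succ fun j => ?_, rfl, fun j => ?_⟩
  · simp only [Function.iterate_succ_apply']; exact hnext_gt _
  · simp only [Function.iterate_succ_apply']; exact hnext_dist _

/-- Bayesian characterization of convergence (Theorem 1, path-wise content):
the series `∑_{i=1}^∞ x i` converges to a finite limit iff there is a nonnegative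
sequence `c j → 0` such that for every choice of block sizes `n j ≥ 1`, the
posterior means tend to `1`. -/
theorem bayesian_characterization_of_convergence (x : ℕ → ℝ) :
    (∃ L : ℝ, Tendsto (fun m => ∑ i ∈ Finset.Icc 1 m, x i) atTop (nhds L)) ↔
      ∃ c : ℕ → ℝ, (∀ j, 0 ≤ c j) ∧ Tendsto c atTop (nhds 0) ∧
        ∀ n : ℕ → ℕ, (∀ j, 1 ≤ n j) →
          Tendsto (fun k => postMean x n c k) atTop (nhds 1) := by
  constructor
  · rintro ⟨L, hL⟩
    obtain ⟨b, hb_nonneg, hb, hb_lim⟩ := cauchySeq_iff_le_tendsto_0.1 hL.cauchySeq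
    refine ⟨fun j => b (j - 1), fun j => hb_nonneg _, hb_lim.comp (tendsto_sub_atTop_nat 1),
      fun n hn => (tendsto_postMean_one_iff x n _).2 (Tendsto.cesaro_Icc_one ?_)⟩
    exact tendsto_const_nhds.congr fun j => (if_pos (abs_blockSum_le hb hn j)).symm
  · rintro ⟨c, -, hc, hpost⟩
    apply cauchySeq_tendsto_of_complete
    by_contra hT
    obtain ⟨ε, hε, N, hN, hN0, hgap⟩ := exists_strictMono_le_dist_of_not_cauchySeq hT
    obtain ⟨n, hn, rfl⟩ := exists_blockEnd_eq hN hN0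
    have hy : ∀ᶠ j in atTop, indicatorY x n c j = 0 := by
      filter_upwards [hc.eventually (gt_mem_nhds hε), eventually_ge_atTop 1] with j hcj hj
      obtain ⟨i, rfl⟩ := Nat.exists_eq_add_of_le' hj
      refine if_neg (lt_of_lt_of_le hcj ?_).not_ge
      rw [blockSum_eq_sub, ← Real.dist_eq, Nat.add_sub_cancel]
      exact hgap i
    have hmean := Tendsto.cesaro_Icc_one (tendsto_const_nhds.congr' (hy.mono fun j h => h.symm))
    exact one_ne_zero (tendsto_nhds_unique ((tendsto_postMean_one_iff x n c).1 (hpost n hn)) hmean)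
end

section
/- Let (X_i)_{i≥1} be independent and identically distributed real random variables with P(X_i = 1) = P(X_i = −1) = 1/2 (Rademacher random variables), and let p ≤ 1/2 be a real number. Then almost surely the random Dirichlet series Σ_{i=1}^∞ X_i · i^{−p} does not converge to a finite limit (its partial sums fail to converge). -/
/-!
For `p ≤ 0` the terms `X i * (i + 1) ^ (-p)` have absolute value at least `1`, so the partial sums
cannot converge. For `0 ≤ p ≤ 1/2`, write `a i = (i + 1) ^ (-p)`. Convergence of a series of
independent random variables is a tail event, hence has probability `0` or `1` by Kolmogorov's
0-1 law. If it had probability `1`, the block sums `B n = ∑_{n ≤ i < 2n} X i * a i` would tend to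
`0` almost surely, so `E[exp (B n * I)] → 1` by dominated convergence. By independence this
expectation is `∏_{n ≤ i < 2n} cos (a i) ≤ exp (-(2/π²) ∑_{n ≤ i < 2n} a i ^ 2) ≤ exp (-1/π²)`,
because `a i ^ 2 = (i + 1) ^ (-2p) ≥ 1 / (2n)` on the block.
-/

open Filter Finset MeasureTheory ProbabilityTheory Topology Real

section PartialSums

variable {G : Type*} [AddCommGroup G] [TopologicalSpace G] [IsTopologicalAddGroup G]

lemma exists_tendsto_sum_range_add_iff (f : ℕ → G) (n : ℕ) :
    (∃ L, Tendsto (fun m ↦ ∑ i ∈ range m, f (n + i)) atTop (𝓝 L)) ↔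
      ∃ L, Tendsto (fun m ↦ ∑ i ∈ range m, f i) atTop (𝓝 L) := by
  simp_rw [← tendsto_add_atTop_iff_nat n (f := fun m ↦ ∑ i ∈ range m, f i), add_comm _ n,
    sum_range_add]
  constructor
  · rintro ⟨L, hL⟩
    exact ⟨_, hL.const_add _⟩
  · rintro ⟨L, hL⟩
    refine ⟨L - ∑ i ∈ range n, f i, ?_⟩
    rwa [← tendsto_const_add_iff (∑ i ∈ range n, f i), add_sub_cancel]

lemma tendsto_sum_Ico_two_mul_of_tendsto {f : ℕ → G} {L : G}
    (h : Tendsto (fun m ↦ ∑ i ∈ range m, f i) atTop (𝓝 L)) :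
    Tendsto (fun n ↦ ∑ i ∈ Ico n (2 * n), f i) atTop (𝓝 0) := by
  have h2 : Tendsto (fun n ↦ ∑ i ∈ range (2 * n), f i) atTop (𝓝 L) :=
    h.comp (tendsto_id.const_mul_atTop' two_pos)
  simpa [sum_Ico_eq_sub _ (Nat.le_mul_of_pos_left _ two_pos)] using h2.sub h

lemma tendsto_zero_of_tendsto_sum_range {f : ℕ → G} {L : G}
    (h : Tendsto (fun m ↦ ∑ i ∈ range m, f i) atTop (𝓝 L)) :
    Tendsto f atTop (𝓝 0) := by
  simpa [sum_range_succ] using ((tendsto_add_atTop_iff_nat 1).2 h).sub h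

end PartialSums

lemma not_tendsto_sum_range_of_one_le_abs {f : ℕ → ℝ} (hf : ∀ i, 1 ≤ |f i|) (L : ℝ) :
    ¬ Tendsto (fun m ↦ ∑ i ∈ range m, f i) atTop (𝓝 L) := fun h ↦ by
  have habs := (tendsto_zero_of_tendsto_sum_range h).abs
  rw [abs_zero] at habs
  obtain ⟨i, hi⟩ := (habs.eventually (gt_mem_nhds one_pos)).exists
  exact (hf i).not_gt hi

lemma cos_le_exp_neg_sq {x : ℝ} (hx : |x| ≤ π) : cos x ≤ exp (-(2 / π ^ 2 * x ^ 2)) := by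
  linarith [cos_le_one_sub_mul_cos_sq hx, add_one_le_exp (-(2 / π ^ 2 * x ^ 2))]

lemma prod_cos_le_exp_neg_sum_sq {ι : Type*} {s : Finset ι} {a : ι → ℝ}
    (ha : ∀ i ∈ s, |a i| ≤ π / 2) :
    ∏ i ∈ s, cos (a i) ≤ exp (-(2 / π ^ 2 * ∑ i ∈ s, a i ^ 2)) := by
  rw [mul_sum, ← sum_neg_distrib, exp_sum]
  refine prod_le_prod (fun i hi ↦ cos_nonneg_of_mem_Icc (abs_le.1 (ha i hi))) fun i hi ↦ ?_
  exact cos_le_exp_neg_sq ((ha i hi).trans (by linarith [pi_pos]))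

lemma one_half_le_sum_Ico_two_mul_rpow_sq {p : ℝ} (hp : p ≤ 1 / 2) {n : ℕ} (hn : 0 < n) :
    1 / 2 ≤ ∑ i ∈ Ico n (2 * n), (((i : ℝ) + 1) ^ (-p)) ^ 2 := by
  have hterm : ∀ i ∈ Ico n (2 * n), 1 / (2 * n : ℝ) ≤ (((i : ℝ) + 1) ^ (-p)) ^ 2 := by
    intro i hi
    have hi1 : (1 : ℝ) ≤ i + 1 := le_add_of_nonneg_left i.cast_nonneg
    have hi2 : (i : ℝ) + 1 ≤ 2 * n := by exact_mod_cast (mem_Ico.1 hi).2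
    calc 1 / (2 * n : ℝ) ≤ 1 / ((i : ℝ) + 1) := by gcongr
      _ = ((i : ℝ) + 1) ^ (-1 : ℝ) := by rw [rpow_neg_one, one_div]
      _ ≤ ((i : ℝ) + 1) ^ (-p * 2) := rpow_le_rpow_of_exponent_le hi1 (by linarith)
      _ = (((i : ℝ) + 1) ^ (-p)) ^ 2 := by exact_mod_cast rpow_mul_natCast (by linarith) (-p) 2
  calc (1 / 2 : ℝ) = #(Ico n (2 * n)) • (1 / (2 * n : ℝ)) := by
        rw [Nat.card_Ico, show 2 * n - n = n by omega, nsmul_eq_mul]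
        field_simp
    _ ≤ _ := card_nsmul_le_sum _ _ _ hterm

lemma prod_cos_rpow_Ico_two_mul_le {p : ℝ} (hp0 : 0 ≤ p) (hp : p ≤ 1 / 2) {n : ℕ} (hn : 0 < n) :
    ∏ i ∈ Ico n (2 * n), cos (((i : ℝ) + 1) ^ (-p)) ≤ exp (-(1 / π ^ 2)) := by
  have ha : ∀ i ∈ Ico n (2 * n), |((i : ℝ) + 1) ^ (-p)| ≤ π / 2 := fun i _ ↦ by
    have hi1 : (1 : ℝ) ≤ i + 1 := le_add_of_nonneg_left i.cast_nonneg
    rw [abs_of_nonneg (rpow_nonneg (by linarith) _)]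
    linarith [rpow_le_one_of_one_le_of_nonpos hi1 (neg_nonpos.2 hp0), pi_gt_three]
  refine (prod_cos_le_exp_neg_sum_sq ha).trans (exp_le_exp.2 ?_)
  calc -(2 / π ^ 2 * ∑ i ∈ Ico n (2 * n), (((i : ℝ) + 1) ^ (-p)) ^ 2) ≤ -(2 / π ^ 2 * (1 / 2)) :=
        neg_le_neg (by gcongr; exact one_half_le_sum_Ico_two_mul_rpow_sq hp hn)
    _ = -(1 / π ^ 2) := by ring

lemma tendsto_integral_cexp_of_ae_tendsto {Ω : Type*} [MeasurableSpace Ω] {P : Measure Ω}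
    [IsFiniteMeasure P] {Y : ℕ → Ω → ℝ} {Z : Ω → ℝ} (hY : ∀ n, Measurable (Y n))
    (hlim : ∀ᵐ ω ∂P, Tendsto (fun n ↦ Y n ω) atTop (𝓝 (Z ω))) :
    Tendsto (fun n ↦ ∫ ω, Complex.exp (Y n ω * Complex.I) ∂P) atTop
      (𝓝 (∫ ω, Complex.exp (Z ω * Complex.I) ∂P)) :=
  tendsto_integral_of_dominated_convergence (fun _ ↦ 1) (fun n ↦ by fun_prop)
    (integrable_const 1) (fun n ↦ ae_of_all _ fun ω ↦ (Complex.norm_exp_ofReal_mul_I _).le)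
    (hlim.mono fun ω h ↦ ((by fun_prop : Continuous fun x : ℝ ↦
      Complex.exp (x * Complex.I)).tendsto _).comp h)

def IsRademacher {Ω : Type*} [MeasurableSpace Ω] (X : Ω → ℝ) (P : Measure Ω) : Prop :=
  P {ω | X ω = 1} = 1 / 2 ∧ P {ω | X ω = -1} = 1 / 2

section Probability

variable {Ω : Type*} [MeasurableSpace Ω] {P : Measure Ω} [IsProbabilityMeasure P]

lemma ae_eq_one_or_eq_neg_one_of_rademacher {X : Ω → ℝ} (hX : Measurable X)
    (hlaw : IsRademacher X P) :
    ∀ᵐ ω ∂P, X ω = 1 ∨ X ω = -1 := by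
  have hA : MeasurableSet {ω | X ω = 1} := measurableSet_eq_fun hX measurable_const
  have hB : MeasurableSet {ω | X ω = -1} := measurableSet_eq_fun hX measurable_const
  have hdisj : Disjoint {ω | X ω = 1} {ω | X ω = -1} :=
    Set.disjoint_left.2 fun ω (h1 : X ω = 1) (h2 : X ω = -1) ↦ by norm_num [h1] at h2
  have hunion : P ({ω | X ω = 1} ∪ {ω | X ω = -1}) = P Set.univ := by
    rw [measure_union hdisj hB, hlaw.1, hlaw.2, ENNReal.add_halves, measure_univ]
  exact (ae_iff_measure_eq (hA.union hB).nullMeasurableSet).2 hunion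

lemma integral_comp_of_rademacher {E : Type*} [NormedAddCommGroup E] [NormedSpace ℝ E]
    [CompleteSpace E] {X : Ω → ℝ} (hX : Measurable X) (hlaw : IsRademacher X P) (g : ℝ → E) :
    ∫ ω, g (X ω) ∂P = (1 / 2 : ℝ) • (g 1 + g (-1)) := by
  have hA : MeasurableSet {ω | X ω = 1} := measurableSet_eq_fun hX measurable_const
  have hB : MeasurableSet {ω | X ω = -1} := measurableSet_eq_fun hX measurable_const
  have hsplit : (fun ω ↦ g (X ω)) =ᵐ[P]
      {ω | X ω = 1}.indicator (fun _ ↦ g 1) + {ω | X ω = -1}.indicator (fun _ ↦ g (-1)) := by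
    filter_upwards [ae_eq_one_or_eq_neg_one_of_rademacher hX hlaw] with ω hω
    rcases hω with h | h <;> norm_num [Set.indicator_apply, h]
  rw [integral_congr_ae hsplit, integral_add' ((integrable_const _).indicator hA)
    ((integrable_const _).indicator hB), integral_indicator_const _ hA,
    integral_indicator_const _ hB, measureReal_def, measureReal_def, hlaw.1, hlaw.2, smul_add]
  norm_num

lemma integral_cexp_mul_of_rademacher {X : Ω → ℝ} (hX : Measurable X) (hlaw : IsRademacher X P)
    (a : ℝ) : ∫ ω, Complex.exp ((X ω * a : ℝ) * Complex.I) ∂P = (cos a : ℂ) := by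
  rw [integral_comp_of_rademacher hX hlaw (fun x ↦ Complex.exp ((x * a : ℝ) * Complex.I)),
    Complex.ofReal_cos, Complex.cos]
  simp only [Complex.real_smul]
  push_cast
  ring_nf

variable {X : ℕ → Ω → ℝ}

lemma integral_cexp_sum_of_rademacher (hmeas : ∀ i, Measurable (X i)) (hindep : iIndepFun X P)
    (hlaw : ∀ i, IsRademacher (X i) P) (a : ℕ → ℝ) (s : Finset ℕ) :
    ∫ ω, Complex.exp ((∑ i ∈ s, X i ω * a i : ℝ) * Complex.I) ∂P = ∏ i ∈ s, (cos (a i) : ℂ) := by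
  have hs : iIndepFun (fun i : s ↦ X i) P := hindep.precomp Subtype.val_injective
  calc ∫ ω, Complex.exp ((∑ i ∈ s, X i ω * a i : ℝ) * Complex.I) ∂P
      = ∫ ω, ∏ i : s, Complex.exp ((X i ω * a i : ℝ) * Complex.I) ∂P := by
        congr with ω
        rw [← Complex.exp_sum, ← Finset.sum_mul, ← Complex.ofReal_sum,
          Finset.sum_coe_sort s (fun i ↦ X i ω * a i)]
    _ = ∏ i : s, ∫ ω, Complex.exp ((X i ω * a i : ℝ) * Complex.I) ∂P :=
        hs.integral_fun_prod_comp (X := fun i : s ↦ X i)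
          (f := fun i x ↦ Complex.exp ((x * a i : ℝ) * Complex.I))
          (fun i ↦ (hmeas i).aemeasurable) (fun i ↦ by fun_prop)
    _ = ∏ i ∈ s, (cos (a i) : ℂ) := by
        rw [← Finset.prod_coe_sort s]
        exact prod_congr rfl fun i _ ↦ integral_cexp_mul_of_rademacher (hmeas i) (hlaw i) (a i)

lemma ae_not_or_ae_exists_tendsto_sum_range (hmeas : ∀ i, Measurable (X i))
    (hindep : iIndepFun X P) :
    (∀ᵐ ω ∂P, ¬ ∃ L, Tendsto (fun m ↦ ∑ i ∈ range m, X i ω) atTop (𝓝 L)) ∨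
      ∀ᵐ ω ∂P, ∃ L, Tendsto (fun m ↦ ∑ i ∈ range m, X i ω) atTop (𝓝 L) := by
  have hC : MeasurableSet {ω | ∃ L, Tendsto (fun m ↦ ∑ i ∈ range m, X i ω) atTop (𝓝 L)} :=
    measurableSet_exists_tendsto fun m ↦ by fun_prop
  have htail : MeasurableSet[limsup (fun i ↦ MeasurableSpace.comap (X i) inferInstance) atTop]
      {ω | ∃ L, Tendsto (fun m ↦ ∑ i ∈ range m, X i ω) atTop (𝓝 L)} := by
    rw [limsup_eq_iInf_iSup_of_nat, MeasurableSpace.measurableSet_iInf]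
    intro n
    let := ⨆ j ≥ n, MeasurableSpace.comap (X j) inferInstance
    have hXn : ∀ i, Measurable (X (n + i)) := fun i ↦ (comap_measurable (X (n + i))).mono
      (le_iSup₂ (f := fun j (_ : j ≥ n) ↦ MeasurableSpace.comap (X j) inferInstance) (n + i)
        (Nat.le_add_right n i)) le_rfl
    rw [Set.ext fun ω ↦ (exists_tendsto_sum_range_add_iff (X · ω) n).symm]
    exact measurableSet_exists_tendsto fun m ↦ Finset.measurable_sum _ fun i _ ↦ hXn i
  rcases measure_zero_or_one_of_measurableSet_limsup_atTop (fun i ↦ (hmeas i).comap_le) hindep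
    htail with h | h
  · exact Or.inl (measure_eq_zero_iff_ae_notMem.1 h)
  · exact Or.inr ((ae_iff_measure_eq hC.nullMeasurableSet).2 (h.trans measure_univ.symm))

lemma tendsto_prod_cos_Ico_two_mul_of_ae_tendsto (hmeas : ∀ i, Measurable (X i))
    (hindep : iIndepFun X P) (hlaw : ∀ i, IsRademacher (X i) P) {a : ℕ → ℝ}
    (hconv : ∀ᵐ ω ∂P, ∃ L, Tendsto (fun m ↦ ∑ i ∈ range m, X i ω * a i) atTop (𝓝 L)) :
    Tendsto (fun n ↦ ∏ i ∈ Ico n (2 * n), cos (a i)) atTop (𝓝 1) := by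
  have hblock : ∀ᵐ ω ∂P, Tendsto (fun n ↦ ∑ i ∈ Ico n (2 * n), X i ω * a i) atTop (𝓝 0) :=
    hconv.mono fun ω ⟨_, hL⟩ ↦ tendsto_sum_Ico_two_mul_of_tendsto hL
  have h := tendsto_integral_cexp_of_ae_tendsto (Z := 0) (fun n ↦ by fun_prop) hblock
  simp_rw [integral_cexp_sum_of_rademacher hmeas hindep hlaw] at h
  rw [← tendsto_ofReal_iff]
  simpa using h

end Probability

/-- Almost sure divergence of the random Dirichlet series (Example 6):
for i.i.d. Rademacher random variables `X i` (`i ≥ 1`, here indexed by `i + 1`,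
with `P(X i = 1) = P(X i = -1) = 1/2`) and `p ≤ 1/2`, almost surely the series
`∑_{i=1}^∞ X i · i^{-p}` does not converge to a finite limit. -/
theorem random_dirichlet_series_diverges
    {Ω : Type*} [MeasurableSpace Ω] (P : Measure Ω) [IsProbabilityMeasure P]
    (X : ℕ → Ω → ℝ) (hmeas : ∀ i, Measurable (X i))
    (hindep : iIndepFun X P)
    (hlaw : ∀ i, P {ω | X i ω = 1} = 1 / 2 ∧ P {ω | X i ω = -1} = 1 / 2)
    (p : ℝ) (hp : p ≤ 1 / 2) :
    ∀ᵐ ω ∂P, ¬ ∃ L : ℝ,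
      Tendsto (fun m => ∑ i ∈ Finset.range m, X i ω * ((i : ℝ) + 1) ^ (-p))
        atTop (nhds L) := by
  rcases le_total p 0 with hp0 | hp0
  · filter_upwards [ae_all_iff.2 fun i ↦ ae_eq_one_or_eq_neg_one_of_rademacher (hmeas i) (hlaw i)]
      with ω hω
    rintro ⟨L, hL⟩
    refine not_tendsto_sum_range_of_one_le_abs (fun i ↦ ?_) L hL
    have ha : 1 ≤ ((i : ℝ) + 1) ^ (-p) :=
      one_le_rpow (le_add_of_nonneg_left i.cast_nonneg) (neg_nonneg.2 hp0)
    rcases hω i with h | h <;> simpa [h, abs_of_nonneg (zero_le_one.trans ha)]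
  · refine (ae_not_or_ae_exists_tendsto_sum_range (fun i ↦ (hmeas i).mul_const _)
      (hindep.comp _ fun i ↦ measurable_mul_const (((i : ℝ) + 1) ^ (-p)))).resolve_right
      fun hconv ↦ ?_
    have hlim := tendsto_prod_cos_Ico_two_mul_of_ae_tendsto hmeas hindep hlaw hconv
    have h1 : 1 ≤ exp (-(1 / π ^ 2)) :=
      le_of_tendsto hlim ((eventually_gt_atTop 0).mono fun n hn ↦
        prod_cos_rpow_Ico_two_mul_le hp0 hp hn)
    exact (exp_lt_one_iff.2 (neg_lt_zero.2 (by positivity))).not_ge h1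
end
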